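/- arXiv:2507.22015 — 2 statements merged into one kernel-verified Lean document; each statement's English description precedes it below -/
import Mathlib

section
/- For the complete graph K_n on n ≥ 2 vertices, γ(K_n) = n/(n−1). -/
open Finset SimpleGraph

/-- `max_{uv ∈ E(G)} |x_u - x_v|` (as a real supremum over adjacent pairs). -/
noncomputable def edgeSup {V : Type*} (G : SimpleGraph V) (x : V → ℝ) : ℝ :=
  ⨆ p : {p : V × V // G.Adj p.1 p.2}, |x p.1.1 - x p.1.2|

/-- The `l_∞`-smoothing parameter `γ(G)`. -/
noncomputable def gamma {V : Type*} [Fintype V] (G : SimpleGraph V) : ℝ :=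
  sInf {y | ∃ x : V → ℝ, (∑ v, x v) = 0 ∧ (⨆ v, |x v|) = 1 ∧ y = edgeSup G x}

/-- Transmission of a vertex: sum of graph distances to all vertices. -/
noncomputable def transmission {V : Type*} [Fintype V] (G : SimpleGraph V) (u : V) : ℕ :=
  ∑ v, G.dist u v

/-!
If `∑ v, x v = 0` and `|x a| = 1`, the other `n - 1` values average to `-x a / (n - 1)`, so
some neighbour `u` of `a` in `K_n` has `|x a - x u| ≥ 1 + 1 / (n - 1) = n / (n - 1)`.
The vector equal to `1` at one vertex and `-1 / (n - 1)` elsewhere attains this bound.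
-/

section EdgeSup

variable {V : Type*} (G : SimpleGraph V)

lemma abs_sub_le_edgeSup [Finite V] (x : V → ℝ) {u v : V} (h : G.Adj u v) :
    |x u - x v| ≤ edgeSup G x :=
  le_ciSup (f := fun p : {p : V × V // G.Adj p.1 p.2} ↦ |x p.1.1 - x p.1.2|)
    (Set.finite_range _).bddAbove ⟨(u, v), h⟩

lemma edgeSup_le {x : V → ℝ} {c : ℝ} (hc : 0 ≤ c)
    (h : ∀ u v, G.Adj u v → |x u - x v| ≤ c) : edgeSup G x ≤ c :=
  Real.iSup_le (fun p ↦ h _ _ p.2) hc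

lemma edgeSup_neg (x : V → ℝ) : edgeSup G (-x) = edgeSup G x := by
  simp only [edgeSup, Pi.neg_apply, neg_sub_neg, abs_sub_comm]

end EdgeSup

section CompleteGraph

variable {V : Type*} [Fintype V]

lemma exists_ne_le_neg_div_of_sum_eq_zero (hV : 2 ≤ Fintype.card V) {x : V → ℝ}
    (hx : ∑ v, x v = 0) (a : V) : ∃ u ≠ a, x u ≤ -x a / (Fintype.card V - 1) := by
  classical
  have hcard : ((univ.erase a).card : ℝ) = Fintype.card V - 1 := by
    rw [card_erase_of_mem (mem_univ a), card_univ, Nat.cast_sub (by omega), Nat.cast_one]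
  have hpos : (0 : ℝ) < (univ.erase a).card := by
    rw [hcard, sub_pos]; exact Nat.one_lt_cast.mpr hV
  have hrest : ∑ v ∈ univ.erase a, x v = -x a := by
    linarith [add_sum_erase univ x (mem_univ a)]
  obtain ⟨u, hu, hmin⟩ := exists_le_of_sum_le (card_pos.mp (Nat.cast_pos.mp hpos))
    (g := fun _ ↦ -x a / (Fintype.card V - 1)) (by
      rw [hrest, sum_const, nsmul_eq_mul, ← hcard, mul_div_cancel₀ _ hpos.ne'])
  exact ⟨u, ne_of_mem_erase hu, hmin⟩

lemma card_div_mul_le_edgeSup_top (hV : 2 ≤ Fintype.card V) {x : V → ℝ}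
    (hx : ∑ v, x v = 0) (a : V) :
    (Fintype.card V : ℝ) / (Fintype.card V - 1) * x a ≤ edgeSup ⊤ x := by
  have hpos : (Fintype.card V : ℝ) - 1 ≠ 0 := (sub_pos.mpr (Nat.one_lt_cast.mpr hV)).ne'
  obtain ⟨u, hu, hxu⟩ := exists_ne_le_neg_div_of_sum_eq_zero hV hx a
  calc (Fintype.card V : ℝ) / (Fintype.card V - 1) * x a
      = x a - -x a / (Fintype.card V - 1) := by field_simp; ring
    _ ≤ x a - x u := by linarith
    _ ≤ |x a - x u| := le_abs_self _
    _ ≤ edgeSup ⊤ x := abs_sub_le_edgeSup ⊤ x ((top_adj a u).mpr hu.symm)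

lemma card_div_le_edgeSup_top (hV : 2 ≤ Fintype.card V) {x : V → ℝ}
    (hx : ∑ v, x v = 0) (hx1 : ⨆ v, |x v| = 1) :
    (Fintype.card V : ℝ) / (Fintype.card V - 1) ≤ edgeSup ⊤ x := by
  have : Nonempty V := Fintype.card_pos_iff.mp (by omega)
  obtain ⟨a, ha⟩ := exists_eq_ciSup_of_finite (f := fun v ↦ |x v|)
  rcases (abs_eq zero_le_one).mp (ha.trans hx1) with ha | ha
  · simpa [ha] using card_div_mul_le_edgeSup_top hV hx a
  · have hnx : ∑ v, (-x) v = 0 := by simp [hx]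
    simpa [ha, edgeSup_neg] using card_div_mul_le_edgeSup_top hV hnx a

lemma exists_edgeSup_top_le_card_div (hV : 2 ≤ Fintype.card V) :
    ∃ x : V → ℝ, ∑ v, x v = 0 ∧ ⨆ v, |x v| = 1 ∧
      edgeSup ⊤ x ≤ (Fintype.card V : ℝ) / (Fintype.card V - 1) := by
  classical
  have hm : (2 : ℝ) ≤ Fintype.card V := by exact_mod_cast hV
  have hpos : (0 : ℝ) < Fintype.card V - 1 := by linarith
  obtain ⟨a⟩ : Nonempty V := Fintype.card_pos_iff.mp (by omega)
  let x : V → ℝ := fun v ↦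
    ((if v = a then (Fintype.card V : ℝ) else 0) - 1) / (Fintype.card V - 1)
  refine ⟨x, ?_, ?_, ?_⟩
  · simp [x, ← sum_div, sum_sub_distrib]
  · refine le_antisymm (Real.iSup_le (fun v ↦ ?_) zero_le_one) ?_
    · rw [abs_div, abs_of_pos hpos, div_le_one hpos]
      split_ifs <;> rw [abs_le] <;> constructor <;> linarith
    · refine le_ciSup_of_le (Set.finite_range _).bddAbove a ?_
      simp [x, div_self hpos.ne']
  · refine edgeSup_le _ (by positivity) fun u v _ ↦ ?_
    rw [← sub_div, abs_div, abs_of_pos hpos, div_le_div_iff_of_pos_right hpos]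
    split_ifs <;> rw [abs_le] <;> constructor <;> linarith

theorem gamma_top (hV : 2 ≤ Fintype.card V) :
    gamma (⊤ : SimpleGraph V) = (Fintype.card V : ℝ) / (Fintype.card V - 1) := by
  obtain ⟨x, hx, hx1, hle⟩ := exists_edgeSup_top_le_card_div hV
  refine IsLeast.csInf_eq ⟨⟨x, hx, hx1, ?_⟩, ?_⟩
  · exact (hle.antisymm (card_div_le_edgeSup_top hV hx hx1)).symm
  · rintro _ ⟨y, hy, hy1, rfl⟩
    exact card_div_le_edgeSup_top hV hy hy1

end CompleteGraph

theorem stmt2 (n : ℕ) (hn : 2 ≤ n) :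
    gamma (⊤ : SimpleGraph (Fin n)) = (n : ℝ) / ((n : ℝ) - 1) := by
  simpa using gamma_top (V := Fin n) (by simpa using hn)
end

section
/- For connected graphs G and H, γ(G □ H) = 1 / (1/γ(G) + 1/γ(H)), where G □ H is the Cartesian product. -/
open Finset SimpleGraph

/-!
For connected `G`, `γ(G) = |V| / T(G)` with `T(G) = max_u tr(u)`. If `∑ x = 0` and `|x u| = 1`,
then `|V| = |∑_v (x u - x v)| ≤ ∑_v d(u,v) · max_{ab ∈ E} |x a - x b|`, which is
`tr(u) · max_{ab ∈ E} |x a - x b|`; the vector `x v = 1 - (|V| / tr u) d(u,v)`, taken at a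
vertex `u` of maximum transmission, attains the bound. Distances add in `G □ H`, so
`tr(u,v) = m tr_G(u) + n tr_H(v)` and `T(G □ H) = m T(G) + n T(H)`; dividing `nm` by this
gives the formula.
-/

namespace SimpleGraph

variable {V : Type*} {G : SimpleGraph V}

lemma abs_sub_le_length_mul (x : V → ℝ) {c : ℝ}
    (hc : ∀ a b, G.Adj a b → |x a - x b| ≤ c) {u v : V} (p : G.Walk u v) :
    |x u - x v| ≤ p.length * c := by
  induction p with
  | nil => simp
  | @cons a b w hab q ih =>
    calc |x a - x w| ≤ |x a - x b| + |x b - x w| := abs_sub_le _ _ _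
      _ ≤ c + q.length * c := add_le_add (hc a b hab) ih
      _ = (q.cons hab).length * c := by rw [Walk.length_cons]; push_cast; ring

lemma Reachable.abs_sub_le_dist_mul {u v : V} (huv : G.Reachable u v) (x : V → ℝ) {c : ℝ}
    (hc : ∀ a b, G.Adj a b → |x a - x b| ≤ c) : |x u - x v| ≤ G.dist u v * c := by
  obtain ⟨p, hp⟩ := huv.exists_walk_length_eq_dist
  exact hp ▸ abs_sub_le_length_mul x hc p

lemma Connected.abs_sub_dist_le_one (hG : G.Connected) (u : V) {a b : V} (hab : G.Adj a b) :
    |(G.dist u a : ℝ) - G.dist u b| ≤ 1 := by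
  have h₁ : G.dist u a ≤ G.dist u b + G.dist b a := hG.dist_triangle
  have h₂ : G.dist u b ≤ G.dist u a + G.dist a b := hG.dist_triangle
  rw [dist_eq_one_iff_adj.mpr hab.symm] at h₁
  rw [dist_eq_one_iff_adj.mpr hab] at h₂
  rify at h₁ h₂
  exact abs_le.mpr ⟨by linarith, by linarith⟩

lemma dist_boxProd {W : Type*} {H : SimpleGraph W} (hG : G.Preconnected) (hH : H.Preconnected)
    (x y : V × W) : (G □ H).dist x y = G.dist x.1 y.1 + H.dist x.2 y.2 := by
  rw [dist, edist_boxProd, ← (hG x.1 y.1).coe_dist_eq_edist, ← (hH x.2 y.2).coe_dist_eq_edist]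
  exact ENat.toNat_natCast _

lemma edgeSup_nonneg (G : SimpleGraph V) (x : V → ℝ) : 0 ≤ edgeSup G x :=
  Real.iSup_nonneg fun _ ↦ abs_nonneg _

section Transmission

variable {W : Type*} [Fintype V] [Fintype W]

noncomputable def maxTransmission (G : SimpleGraph V) : ℕ :=
  univ.sup (transmission G)

lemma transmission_le_maxTransmission (G : SimpleGraph V) (u : V) :
    transmission G u ≤ maxTransmission G :=
  le_sup (mem_univ u)

lemma exists_transmission_eq_maxTransmission [Nonempty V] (G : SimpleGraph V) :
    ∃ u, transmission G u = maxTransmission G := by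
  obtain ⟨u, -, hu⟩ := exists_mem_eq_sup univ univ_nonempty (transmission G)
  exact ⟨u, hu.symm⟩

lemma Connected.transmission_pos [Nontrivial V] (hG : G.Connected) (u : V) :
    0 < transmission G u := by
  obtain ⟨v, hv⟩ := exists_ne u
  exact (hG.pos_dist_of_ne hv.symm).trans_le
    (single_le_sum (fun _ _ ↦ Nat.zero_le _) (mem_univ v))

lemma maxTransmission_of_subsingleton [Subsingleton V] (G : SimpleGraph V) :
    maxTransmission G = 0 := by
  simp [maxTransmission, transmission]

lemma transmission_boxProd {G : SimpleGraph V} {H : SimpleGraph W} (hG : G.Preconnected)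
    (hH : H.Preconnected) (x : V × W) :
    transmission (G □ H) x =
      Fintype.card W * transmission G x.1 + Fintype.card V * transmission H x.2 := by
  simp [transmission, dist_boxProd hG hH, Fintype.sum_prod_type, sum_add_distrib, mul_sum]

lemma maxTransmission_boxProd [Nonempty V] [Nonempty W] {G : SimpleGraph V} {H : SimpleGraph W}
    (hG : G.Preconnected) (hH : H.Preconnected) :
    maxTransmission (G □ H) =
      Fintype.card W * maxTransmission G + Fintype.card V * maxTransmission H := by
  refine le_antisymm (Finset.sup_le fun x _ ↦ ?_) ?_
  · rw [transmission_boxProd hG hH]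
    gcongr <;> apply transmission_le_maxTransmission
  · obtain ⟨u, hu⟩ := exists_transmission_eq_maxTransmission G
    obtain ⟨v, hv⟩ := exists_transmission_eq_maxTransmission H
    rw [← hu, ← hv, ← transmission_boxProd hG hH (u, v)]
    exact transmission_le_maxTransmission _ _

end Transmission

section Gamma

variable [Fintype V]

lemma abs_sub_le_edgeSup (x : V → ℝ) {a b : V} (hab : G.Adj a b) :
    |x a - x b| ≤ edgeSup G x :=
  le_ciSup (f := fun p : {p : V × V // G.Adj p.1 p.2} ↦ |x p.1.1 - x p.1.2|)
    (Set.finite_range _).bddAbove ⟨(a, b), hab⟩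

lemma Connected.card_mul_abs_le_transmission_mul_edgeSup (hG : G.Connected) {x : V → ℝ}
    (hx : ∑ v, x v = 0) (u : V) :
    Fintype.card V * |x u| ≤ transmission G u * edgeSup G x := by
  have hsum : ∑ v, (x u - x v) = Fintype.card V * x u := by
    simp [sum_sub_distrib, hx]
  calc Fintype.card V * |x u| = |∑ v, (x u - x v)| := by rw [hsum, abs_mul, Nat.abs_cast]
    _ ≤ ∑ v, |x u - x v| := abs_sum_le_sum_abs _ _
    _ ≤ ∑ v, (G.dist u v : ℝ) * edgeSup G x :=
      sum_le_sum fun v _ ↦ (hG u v).abs_sub_le_dist_mul x fun _ _ ↦ abs_sub_le_edgeSup x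
    _ = transmission G u * edgeSup G x := by simp [transmission, sum_mul]

lemma Connected.card_mul_dist_le_transmission_add (hG : G.Connected) (u v : V) :
    Fintype.card V * G.dist u v ≤ transmission G u + transmission G v := by
  calc Fintype.card V * G.dist u v = ∑ _w : V, G.dist u v := by simp
    _ ≤ ∑ w, (G.dist u w + G.dist v w) :=
      sum_le_sum fun w _ ↦ by rw [dist_comm (u := v)]; exact hG.dist_triangle
    _ = transmission G u + transmission G v := sum_add_distrib

/-- When `u` has maximum transmission, this vector attains `γ(G)`. -/
noncomputable def distProfile (G : SimpleGraph V) (u : V) (v : V) : ℝ :=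
  1 - Fintype.card V / transmission G u * G.dist u v

lemma distProfile_self (G : SimpleGraph V) (u : V) : distProfile G u u = 1 := by
  simp [distProfile]

lemma sum_distProfile {u : V} (hu : transmission G u ≠ 0) : ∑ v, distProfile G u v = 0 := by
  have hsum : ∑ v, (G.dist u v : ℝ) = transmission G u := by simp [transmission]
  simp only [distProfile, sum_sub_distrib, ← mul_sum, hsum]
  rw [div_mul_cancel₀ _ (Nat.cast_ne_zero.mpr hu)]
  simp

lemma Connected.abs_distProfile_le_one (hG : G.Connected) {u : V}
    (hu : ∀ w, transmission G w ≤ transmission G u) (v : V) : |distProfile G u v| ≤ 1 := by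
  have hnonneg : 0 ≤ Fintype.card V / (transmission G u : ℝ) * G.dist u v := by positivity
  have hle : Fintype.card V / (transmission G u : ℝ) * G.dist u v ≤ 2 := by
    rw [div_mul_eq_mul_div]
    refine div_le_of_le_mul₀ (by positivity) zero_le_two ?_
    exact_mod_cast (hG.card_mul_dist_le_transmission_add u v).trans (by linarith [hu v])
  rw [distProfile, abs_le]
  constructor <;> linarith

lemma Connected.edgeSup_distProfile [Nontrivial V] (hG : G.Connected) (u : V) :
    edgeSup G (distProfile G u) = Fintype.card V / transmission G u := by
  have ht : 0 ≤ Fintype.card V / (transmission G u : ℝ) := by positivity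
  obtain ⟨w, huw⟩ := hG.preconnected.exists_adj_of_nontrivial u
  have : Nonempty {p : V × V // G.Adj p.1 p.2} := ⟨⟨(u, w), huw⟩⟩
  refine le_antisymm (ciSup_le fun ⟨(a, b), hab⟩ ↦ ?_) ?_
  · have hdiff : distProfile G u a - distProfile G u b =
        Fintype.card V / (transmission G u : ℝ) * ((G.dist u b : ℝ) - G.dist u a) := by
      simp only [distProfile]; ring
    rw [hdiff, abs_mul, abs_of_nonneg ht, abs_sub_comm]
    exact mul_le_of_le_one_right ht (hG.abs_sub_dist_le_one u hab)
  · calc Fintype.card V / (transmission G u : ℝ)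
        = |distProfile G u u - distProfile G u w| := by
          simp [distProfile, dist_eq_one_iff_adj.mpr huw, abs_of_nonneg ht]
      _ ≤ edgeSup G (distProfile G u) := abs_sub_le_edgeSup _ huw

lemma Connected.isLeast_card_div_maxTransmission [Nontrivial V] (hG : G.Connected) :
    IsLeast {y | ∃ x : V → ℝ, (∑ v, x v) = 0 ∧ (⨆ v, |x v|) = 1 ∧ y = edgeSup G x}
      (Fintype.card V / maxTransmission G) := by
  obtain ⟨u, hu⟩ := exists_transmission_eq_maxTransmission G
  have hmax : ∀ w, transmission G w ≤ transmission G u :=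
    hu ▸ transmission_le_maxTransmission G
  have hpos : (0 : ℝ) < maxTransmission G := by exact_mod_cast hu ▸ hG.transmission_pos u
  constructor
  · refine ⟨distProfile G u, sum_distProfile (hG.transmission_pos u).ne', ?_, ?_⟩
    · refine le_antisymm (ciSup_le (hG.abs_distProfile_le_one hmax)) ?_
      exact le_ciSup_of_le (Set.finite_range _).bddAbove u (by simp [distProfile_self])
    · rw [hG.edgeSup_distProfile, hu]
  · rintro _ ⟨x, hsum, hsup, rfl⟩
    obtain ⟨v, hv⟩ := exists_eq_ciSup_of_finite (f := fun v ↦ |x v|)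
    have hcard := hG.card_mul_abs_le_transmission_mul_edgeSup hsum v
    rw [hv, hsup, mul_one] at hcard
    rw [div_le_iff₀' hpos]
    have hv_max : (transmission G v : ℝ) ≤ maxTransmission G := by
      exact_mod_cast transmission_le_maxTransmission G v
    exact hcard.trans (mul_le_mul_of_nonneg_right hv_max (edgeSup_nonneg G x))

lemma gamma_of_subsingleton [Subsingleton V] (G : SimpleGraph V) : gamma G = 0 := by
  rw [gamma]
  convert Real.sInf_empty
  refine Set.eq_empty_of_forall_notMem ?_
  rintro _ ⟨x, hsum, hsup, -⟩
  have hx : ∀ v, x v = 0 := fun v ↦ by rwa [Fintype.sum_subsingleton _ v] at hsum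
  simp [hx] at hsup

/-- On a single vertex no vector is admissible, and both sides are the junk value `0`. -/
lemma Connected.gamma_eq_card_div_maxTransmission (hG : G.Connected) :
    gamma G = Fintype.card V / maxTransmission G := by
  cases subsingleton_or_nontrivial V
  · simp [gamma_of_subsingleton, maxTransmission_of_subsingleton]
  · exact hG.isLeast_card_div_maxTransmission.csInf_eq

end Gamma

end SimpleGraph

theorem stmt18 {V W : Type*} [Fintype V] [Fintype W]
    (G : SimpleGraph V) (H : SimpleGraph W)
    (hG : G.Connected) (hH : H.Connected) :
    gamma (G □ H) = 1 / (1 / gamma G + 1 / gamma H) := by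
  have := hG.nonempty
  have := hH.nonempty
  rw [hG.gamma_eq_card_div_maxTransmission, hH.gamma_eq_card_div_maxTransmission,
    (hG.boxProd hH).gamma_eq_card_div_maxTransmission,
    maxTransmission_boxProd hG.preconnected hH.preconnected, Fintype.card_prod]
  have hn : (Fintype.card V : ℝ) ≠ 0 := by positivity
  have hm : (Fintype.card W : ℝ) ≠ 0 := by positivity
  push_cast
  rw [one_div_div, one_div_div]
  field_simp
end
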